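/- arXiv:2303.10375 — 3 statements merged into one kernel-verified Lean document; each statement's English description precedes it below -/
import Mathlib

section
/- (Verlinde-type trigonometric identity for sl₂ level k fusion.) Let k be a positive integer, θ = π/(k+2), and let 0 ≤ i, j ≤ k. Then sin(θ) · Σ_{l} sin((l+1)θ) = sin((i+1)θ) · sin((j+1)θ), where the sum is over all integers l with |i-j| ≤ l ≤ i+j, i+j+l even, and i+j+l ≤ 2k. -/
/-! The admissible `l` are `|i - j|, |i - j| + 2, …` up to `top = min (i + j) (2k - i - j)`.
Since `2 sin θ sin ((l + 1) θ) = cos (l θ) - cos ((l + 2) θ)`, the sum telescopes to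
`cos ((i - j) θ) - cos ((top + 2) θ)`. When the level truncates the range,
`top + 2 = 2 (k + 2) - (i + j + 2)` and `(k + 2) θ = π`, so this cosine is still
`cos ((i + j + 2) θ)`, and the product-to-sum formula finishes. -/

open Real Finset

theorem two_mul_sin_mul_sum_range_sin (θ a : ℝ) (n : ℕ) :
    2 * sin θ * ∑ t ∈ range n, sin ((a + 2 * t + 1) * θ) =
      cos (a * θ) - cos ((a + 2 * n) * θ) := by
  induction n with
  | zero => simp
  | succ n ih =>
    have step : 2 * sin θ * sin ((a + 2 * n + 1) * θ) =
        cos ((a + 2 * n) * θ) - cos ((a + 2 * (n + 1)) * θ) := by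
      rw [mul_right_comm, two_mul_sin_mul_sin]
      congr 2 <;> ring
    rw [sum_range_succ, mul_add, ih, step]
    push_cast
    ring

theorem two_mul_sin_mul_sum_sin_arithProg (θ : ℝ) (a n : ℕ) :
    2 * sin θ * ∑ l ∈ (range n).image (fun t => a + 2 * t), sin (((l : ℝ) + 1) * θ) =
      cos (a * θ) - cos (((a + 2 * n : ℕ) : ℝ) * θ) := by
  rw [sum_image (fun _ _ _ _ h => by omega)]
  push_cast
  exact two_mul_sin_mul_sum_range_sin θ a n

theorem fusion_filter_eq_image (k i j : ℕ) (hi : i ≤ k) (hj : j ≤ k) :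
    (range (i + j + 1)).filter
        (fun l => i ≤ j + l ∧ j ≤ i + l ∧ Even (i + j + l) ∧ i + j + l ≤ 2 * k) =
      (range (min (min i j) (k - max i j) + 1)).image (fun t => max i j - min i j + 2 * t) := by
  ext l
  simp only [mem_filter, mem_range, mem_image, Nat.even_iff]
  constructor
  · intro _
    exact ⟨(l - (max i j - min i j)) / 2, by omega, by omega⟩
  · rintro ⟨t, _, rfl⟩
    omega

theorem cos_mul_pi_div_eq_of_add_eq (k m m' : ℕ) (h : m + m' = 2 * (k + 2)) :
    cos (m * (π / (k + 2))) = cos (m' * (π / (k + 2))) := by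
  have hm : (m : ℝ) * (π / (k + 2)) = 2 * π - m' * (π / (k + 2)) := by
    have h' : (m : ℝ) + m' = 2 * (k + 2) := mod_cast h
    rw [eq_sub_iff_add_eq, ← add_mul, h']
    field_simp
  rw [hm, cos_two_pi_sub]

theorem cos_natCast_max_sub_min_mul (i j : ℕ) (θ : ℝ) :
    cos (((max i j - min i j : ℕ) : ℝ) * θ) = cos (((i : ℝ) - j) * θ) := by
  rw [Nat.cast_sub (min_le_max), Nat.cast_max, Nat.cast_min, max_sub_min_eq_abs']
  rcases abs_choice ((i : ℝ) - j) with h | h <;> rw [h]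
  rw [neg_mul, cos_neg]

theorem verlinde_sl2_identity_general (k : ℕ) (i j : ℕ) (hi : i ≤ k) (hj : j ≤ k) :
    Real.sin (π / (k + 2)) *
      ∑ l ∈ (range (i + j + 1)).filter
          (fun l => i ≤ j + l ∧ j ≤ i + l ∧ Even (i + j + l) ∧ i + j + l ≤ 2 * k),
        Real.sin (((l : ℝ) + 1) * (π / (k + 2))) =
      Real.sin (((i : ℝ) + 1) * (π / (k + 2))) *
        Real.sin (((j : ℝ) + 1) * (π / (k + 2))) := by
  set θ := π / (k + 2)
  set a := max i j - min i j
  set n := min (min i j) (k - max i j) + 1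
  have telescope := two_mul_sin_mul_sum_sin_arithProg θ a n
  have top : cos (((a + 2 * n : ℕ) : ℝ) * θ) = cos (((i : ℝ) + j + 2) * θ) := by
    have h_top : a + 2 * n = i + j + 2 ∨ a + 2 * n + (i + j + 2) = 2 * (k + 2) := by omega
    rcases h_top with h | h
    · rw [h]; push_cast; rfl
    · rw [cos_mul_pi_div_eq_of_add_eq k _ _ h]; push_cast; rfl
  have product : 2 * sin (((i : ℝ) + 1) * θ) * sin (((j : ℝ) + 1) * θ) =
      cos (((i : ℝ) - j) * θ) - cos (((i : ℝ) + j + 2) * θ) := by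
    rw [two_mul_sin_mul_sin]
    congr 2 <;> ring
  rw [fusion_filter_eq_image k i j hi hj]
  rw [top, cos_natCast_max_sub_min_mul] at telescope
  linarith

open Real Finset in
/-- Verlinde-type trigonometric identity for sl₂ level k fusion: with θ = π/(k+2),
sin θ · Σ_l sin((l+1)θ) = sin((i+1)θ)·sin((j+1)θ), the sum over l with
|i-j| ≤ l ≤ i+j, i+j+l even and i+j+l ≤ 2k. -/
theorem verlinde_sl2_identity (k : ℕ) (hk : 0 < k) (i j : ℕ) (hi : i ≤ k) (hj : j ≤ k) :
    Real.sin (π / (k + 2)) *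
      ∑ l ∈ (range (i + j + 1)).filter
          (fun l => i ≤ j + l ∧ j ≤ i + l ∧ Even (i + j + l) ∧ i + j + l ≤ 2 * k),
        Real.sin (((l : ℝ) + 1) * (π / (k + 2))) =
      Real.sin (((i : ℝ) + 1) * (π / (k + 2))) *
        Real.sin (((j : ℝ) + 1) * (π / (k + 2))) :=
  verlinde_sl2_identity_general k i j hi hj
end

section
/- (Associativity of the sl₂ level-k fusion coefficients.) For a positive integer k define N : {0,...,k}³ → ℕ by N(i,j,l) = 1 if |i-j| ≤ l ≤ i+j, i+j+l is even, and i+j+l ≤ 2k, and N(i,j,l) = 0 otherwise. Then N(i,j,l) = N(j,i,l) for all i,j,l, and for all i,j,l,m ∈ {0,...,k}: Σ_{p=0}^{k} N(i,j,p)·N(p,l,m) = Σ_{q=0}^{k} N(j,l,q)·N(i,q,m). -/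
/-!
For fixed `i j l m` the products `N(i,j,p) N(p,l,m)` are the indicator of the `p` in the window
`max(|i-j|, |l-m|) ≤ p ≤ min(i+j, l+m, 2k-i-j, 2k-l-m)` with `p ≡ i+j (mod 2)`, provided
`i+j+l+m` is even (otherwise they all vanish). So the sum counts `max(0, hi - lo + 2) / 2` points,
and `hi - lo` is the minimum of the sixteen differences of an upper and a lower bound, namely
`2x, 2k-2x, s-2x, 2k-s+2x` for `x ∈ {i,j,l,m}` and `s = i+j+l+m`: a set symmetric in all four
weights, so the count is unchanged when `(i,j,l)` is rotated to `(j,l,i)`.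
-/

open Finset

lemma card_filter_range_parity {a r : ℕ} (ha : a % 2 = r) (b n : ℕ) :
    #{p ∈ range n | a ≤ p ∧ p ≤ b ∧ p % 2 = r} = (min (b + 1) n - a + 1) / 2 := by
  induction n with
  | zero => simp
  | succ n ih =>
    rw [range_add_one, filter_insert]
    split_ifs
    · rw [card_insert_of_notMem (by simp), ih]; omega
    · rw [ih]; omega

def fusionCoeff (k i j l : ℕ) : ℕ :=
  if i ≤ j + l ∧ j ≤ i + l ∧ l ≤ i + j ∧ Even (i + j + l) ∧ i + j + l ≤ 2 * k then 1 else 0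

lemma fusionCoeff_comm (k i j l : ℕ) : fusionCoeff k i j l = fusionCoeff k j i l := by
  unfold fusionCoeff
  rw [add_comm i j]
  exact if_congr (by tauto) rfl rfl

def fusionWindowLo (i j l m : ℕ) : ℕ := max (max (i - j) (j - i)) (max (l - m) (m - l))

def fusionWindowHi (k i j l m : ℕ) : ℕ :=
  min (min (i + j) (l + m)) (min (2 * k - (i + j)) (2 * k - (l + m)))

section Window

variable {k i j l m : ℕ} (hi : i ≤ k) (hj : j ≤ k) (hl : l ≤ k) (hm : m ≤ k)
include hi hj hl hm

lemma fusionWindowHi_le : fusionWindowHi k i j l m ≤ k := by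
  unfold fusionWindowHi
  omega

lemma fusionCoeff_mul_fusionCoeff (p : ℕ) :
    fusionCoeff k i j p * fusionCoeff k p l m =
      if Even (i + j + l + m) ∧ fusionWindowLo i j l m ≤ p ∧ p ≤ fusionWindowHi k i j l m ∧
        p % 2 = (i + j) % 2 then 1 else 0 := by
  rw [fusionCoeff, fusionCoeff, ite_zero_mul_ite_zero, mul_one]
  refine if_congr ?_ rfl rfl
  simp only [fusionWindowLo, fusionWindowHi, Nat.even_iff, max_le_iff, le_min_iff]
  omega

lemma sum_fusionCoeff_mul_fusionCoeff :
    ∑ p ∈ range (k + 1), fusionCoeff k i j p * fusionCoeff k p l m =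
      if Even (i + j + l + m) then
        (fusionWindowHi k i j l m + 2 - fusionWindowLo i j l m) / 2
      else 0 := by
  simp only [fusionCoeff_mul_fusionCoeff hi hj hl hm, sum_boole, Nat.cast_id]
  split_ifs with hs
  · have hlo : fusionWindowLo i j l m % 2 = (i + j) % 2 := by
      rw [Nat.even_iff] at hs
      unfold fusionWindowLo
      omega
    simp only [hs, true_and]
    rw [card_filter_range_parity hlo]
    have := fusionWindowHi_le hi hj hl hm
    omega
  · simp [hs]

lemma fusionWindow_width_rotate :
    fusionWindowHi k i j l m + 2 - fusionWindowLo i j l m =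
      fusionWindowHi k j l i m + 2 - fusionWindowLo j l i m := by
  refine eq_of_forall_lt_iff fun c => ?_
  simp only [fusionWindowLo, fusionWindowHi, Nat.lt_sub_iff_add_lt, ← max_add_add_left,
    ← min_add_add_right, max_lt_iff, lt_min_iff]
  omega

lemma sum_fusionCoeff_mul_fusionCoeff_rotate :
    ∑ p ∈ range (k + 1), fusionCoeff k i j p * fusionCoeff k p l m =
      ∑ p ∈ range (k + 1), fusionCoeff k j l p * fusionCoeff k p i m := by
  rw [sum_fusionCoeff_mul_fusionCoeff hi hj hl hm, sum_fusionCoeff_mul_fusionCoeff hj hl hi hm,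
    fusionWindow_width_rotate hi hj hl hm, show j + l + i + m = i + j + l + m by ring]

end Window

open Finset in
theorem fusion_coefficients_assoc_general (k : ℕ)
    (N : ℕ → ℕ → ℕ → ℕ)
    (hN : ∀ i j l, N i j l =
      if i ≤ j + l ∧ j ≤ i + l ∧ l ≤ i + j ∧ Even (i + j + l) ∧ i + j + l ≤ 2 * k
      then 1 else 0) :
    (∀ i j l, i ≤ k → j ≤ k → l ≤ k → N i j l = N j i l) ∧
    (∀ i j l m, i ≤ k → j ≤ k → l ≤ k → m ≤ k →
      ∑ p ∈ range (k + 1), N i j p * N p l m =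
        ∑ q ∈ range (k + 1), N j l q * N i q m) := by
  obtain rfl : N = fusionCoeff k := funext fun i => funext fun j => funext (hN i j)
  refine ⟨fun i j l _ _ _ => fusionCoeff_comm k i j l, fun i j l m hi hj hl hm => ?_⟩
  simp only [fusionCoeff_comm k i _ m]
  exact sum_fusionCoeff_mul_fusionCoeff_rotate hi hj hl hm

open Finset in
/-- The sl₂ level-k fusion coefficients N(i,j,l) (equal to 1 iff |i-j| ≤ l ≤ i+j,
i+j+l even and i+j+l ≤ 2k, else 0) are symmetric and associative:
Σ_p N(i,j,p)N(p,l,m) = Σ_q N(j,l,q)N(i,q,m). -/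
theorem fusion_coefficients_assoc (k : ℕ) (hk : 0 < k)
    (N : ℕ → ℕ → ℕ → ℕ)
    (hN : ∀ i j l, N i j l =
      if i ≤ j + l ∧ j ≤ i + l ∧ l ≤ i + j ∧ Even (i + j + l) ∧ i + j + l ≤ 2 * k
      then 1 else 0) :
    (∀ i j l, i ≤ k → j ≤ k → l ≤ k → N i j l = N j i l) ∧
    (∀ i j l m, i ≤ k → j ≤ k → l ≤ k → m ≤ k →
      ∑ p ∈ range (k + 1), N i j p * N p l m =
        ∑ q ∈ range (k + 1), N j l q * N i q m) :=
  fusion_coefficients_assoc_general k N hN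
end

section
/- For a positive integer k ≡ 2 (mod 4), with θ = π/(k+2): (Σ_{l=0, l even}^{k/2 - 1} 2·sin((l+1)θ)) · sin(θ) = 1. Equivalently, the sum of quantum dimensions Σ_{0 ≤ l < k/2, l even} 2·sin((l+1)θ)/sin(θ) equals (1/sin(θ))², which is the product of the quantum dimensions 1/sin(θ) of the modules \overline{L(k,k/2)}^{σ_r,j}. -/
/-!
Writing k = 4t + 2, the even l < k/2 are l = 2m with m ≤ t, and the product-to-sum identity
2 sin θ sin((2m+1)θ) = cos(2mθ) - cos((2m+2)θ) telescopes to
sin θ · Σ_{m<n} sin((2m+1)θ) = sin²(nθ). With n = t + 1 we have nθ = π/4, so the product is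
2 sin²(π/4) = 1.
-/

open Real Finset

theorem Real.sin_mul_sum_sin_odd_mul (n : ℕ) (θ : ℝ) :
    sin θ * ∑ i ∈ range n, sin ((2 * i + 1) * θ) = sin (n * θ) ^ 2 := by
  convert Real.sin_mul_sum_sin n (2 * θ) θ using 3 <;> ring_nf

theorem Finset.range_filter_even (n : ℕ) :
    (range n).filter Even = (range ((n + 1) / 2)).image (2 * ·) := by
  ext l
  simp only [mem_filter, mem_range, mem_image, Nat.even_iff]
  constructor
  · rintro ⟨hl, he⟩
    exact ⟨l / 2, by omega, by omega⟩
  · rintro ⟨m, hm, rfl⟩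
    omega

theorem Finset.sum_filter_even_range {M : Type*} [AddCommMonoid M] (f : ℕ → M) (n : ℕ) :
    ∑ l ∈ (range n).filter Even, f l = ∑ m ∈ range ((n + 1) / 2), f (2 * m) := by
  rw [range_filter_even, sum_image fun a _ b _ h => by omega]

open Real Finset in
/-- Quantum-dimension identity for k ≡ 2 (mod 4), θ = π/(k+2):
(Σ_{0 ≤ l < k/2, l even} 2 sin((l+1)θ)) · sin θ = 1, i.e. the total quantum
dimension of ⊕_{0≤l<k/2, l even} \overline{L(k,l)}^{σ₃,+} equals (1/sin θ)². -/
theorem sum_qdim_twisted (k : ℕ) (hk : k % 4 = 2) :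
    (∑ l ∈ (range (k / 2)).filter (fun l => Even l),
        2 * Real.sin (((l : ℝ) + 1) * (π / (k + 2)))) *
      Real.sin (π / (k + 2)) = 1 := by
  obtain ⟨t, rfl⟩ : ∃ t, k = 4 * t + 2 := ⟨k / 4, by omega⟩
  have hcount : ((4 * t + 2) / 2 + 1) / 2 = t + 1 := by omega
  have hangle : ((t + 1 : ℕ) : ℝ) * (π / (4 * t + 2 + 2)) = π / 4 := by
    push_cast
    field_simp
    ring
  rw [sum_filter_even_range, hcount, ← mul_sum, mul_comm, mul_left_comm]
  push_cast
  rw [sin_mul_sum_sin_odd_mul, hangle, sin_pi_div_four, div_pow, sq_sqrt zero_le_two]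
  norm_num
end
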